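/- arXiv:0704.1284 — 2 statements merged into one kernel-verified Lean document; each statement's English description precedes it below -/
import Mathlib

section
/- Under the change of variables (y1, y2, y3) = T(u, v, w), the system y1' = -k1 y1, y2' = k1 y1 + y2(G - ε y3), y3' = y2(k2 - ε y3) is equivalent to the normal form u' = (1 - k2/G) f(u,v,w), v' = G v + f(u,v,w), w' = -k1 w, where f(u,v,w) = -(ε/G)(v - k1 w)(k2 v + G(u + k2 w)). -/
/-!
The matrix `T` is invertible (its determinant is `-(G + k1)`) and conjugates the normal-form
vector field `N` to the original one `F`: `T (N x) = F (T x)`. Since a constant invertible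
linear map commutes with differentiation, `y = T x` solves `y' = F y` exactly when `x' = N x`.
-/

open Matrix

section MulVec

variable {n : Type*} [Fintype n]

theorem hasDerivAt_mulVec (A : Matrix n n ℝ) {x : ℝ → n → ℝ} {x' : n → ℝ} {t : ℝ}
    (hx : HasDerivAt x x' t) : HasDerivAt (fun s => A *ᵥ x s) (A *ᵥ x') t :=
  (LinearMap.toContinuousLinearMap (mulVecLin A)).hasFDerivAt.comp_hasDerivAt t hx

theorem hasDerivAt_mulVec_iff [DecidableEq n] {A : Matrix n n ℝ} (hA : IsUnit A.det) {x : ℝ → n → ℝ}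
    {x' : n → ℝ} {t : ℝ} :
    HasDerivAt (fun s => A *ᵥ x s) (A *ᵥ x') t ↔ HasDerivAt x x' t := by
  refine ⟨fun h => ?_, hasDerivAt_mulVec A⟩
  simpa [mulVec_mulVec, nonsing_inv_mul _ hA] using hasDerivAt_mulVec A⁻¹ h

end MulVec

theorem hasDerivAt_vecCons_three_iff {a b c : ℝ → ℝ} {a' b' c' t : ℝ} :
    HasDerivAt (fun s => ![a s, b s, c s]) ![a', b', c'] t ↔
      HasDerivAt a a' t ∧ HasDerivAt b b' t ∧ HasDerivAt c c' t := by
  simp [hasDerivAt_pi, Fin.forall_fin_succ]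

noncomputable def transformMatrix (k1 k2 G : ℝ) : Matrix (Fin 3) (Fin 3) ℝ :=
  !![0, 0, G + k1; 0, 1, -k1; 1, k2 / G, k2]

def originalField (k1 k2 G ε : ℝ) (y : Fin 3 → ℝ) : Fin 3 → ℝ :=
  ![-k1 * y 0, k1 * y 0 + y 1 * (G - ε * y 2), y 1 * (k2 - ε * y 2)]

noncomputable def normalFormField (k1 k2 G ε : ℝ) (x : Fin 3 → ℝ) : Fin 3 → ℝ :=
  let f := -(ε / G) * (x 1 - k1 * x 2) * (k2 * x 1 + G * (x 0 + k2 * x 2))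
  ![(1 - k2 / G) * f, G * x 1 + f, -k1 * x 2]

theorem det_transformMatrix (k1 k2 G : ℝ) : (transformMatrix k1 k2 G).det = -(G + k1) := by
  simp [transformMatrix, det_fin_three]

theorem transformMatrix_mulVec_normalFormField {k1 k2 G : ℝ} (ε : ℝ) (hG : G ≠ 0)
    (x : Fin 3 → ℝ) :
    transformMatrix k1 k2 G *ᵥ normalFormField k1 k2 G ε x =
      originalField k1 k2 G ε (transformMatrix k1 k2 G *ᵥ x) := by
  ext i
  fin_cases i <;> simp [transformMatrix, normalFormField, originalField, mulVec, dotProduct,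
    Fin.sum_univ_three] <;> field_simp <;> ring

theorem stmt_3 (k1 k2 G ε : ℝ) (hG : G ≠ 0) (hGk : G + k1 ≠ 0)
    (u v w : ℝ → ℝ)
    (f : ℝ → ℝ → ℝ → ℝ)
    (hf : ∀ U V W, f U V W = -(ε / G) * (V - k1 * W) * (k2 * V + G * (U + k2 * W)))
    (y1 y2 y3 : ℝ → ℝ)
    (hy1 : ∀ t, y1 t = (G + k1) * w t)
    (hy2 : ∀ t, y2 t = v t - k1 * w t)
    (hy3 : ∀ t, y3 t = u t + (k2 / G) * v t + k2 * w t) :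
    ((∀ t, HasDerivAt y1 (-k1 * y1 t) t) ∧
     (∀ t, HasDerivAt y2 (k1 * y1 t + y2 t * (G - ε * y3 t)) t) ∧
     (∀ t, HasDerivAt y3 (y2 t * (k2 - ε * y3 t)) t))
    ↔
    ((∀ t, HasDerivAt u ((1 - k2 / G) * f (u t) (v t) (w t)) t) ∧
     (∀ t, HasDerivAt v (G * v t + f (u t) (v t) (w t)) t) ∧
     (∀ t, HasDerivAt w (-k1 * w t) t)) := by
  set T := transformMatrix k1 k2 G
  have hT : IsUnit T.det := by
    rw [det_transformMatrix]
    exact (neg_ne_zero.2 hGk).isUnit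
  have hy : ∀ t, ![y1 t, y2 t, y3 t] = T *ᵥ ![u t, v t, w t] := fun t => by
    ext i
    fin_cases i <;>
      simp [T, transformMatrix, mulVec, dotProduct, Fin.sum_univ_three, hy1, hy2, hy3,
        sub_eq_add_neg]
  have hN : ∀ t, ![(1 - k2 / G) * f (u t) (v t) (w t), G * v t + f (u t) (v t) (w t),
      -k1 * w t] = normalFormField k1 k2 G ε ![u t, v t, w t] := fun t => by
    simp [normalFormField, hf]
  have hF : ∀ t, ![-k1 * y1 t, k1 * y1 t + y2 t * (G - ε * y3 t), y2 t * (k2 - ε * y3 t)] =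
      T *ᵥ normalFormField k1 k2 G ε ![u t, v t, w t] := fun t => by
    rw [transformMatrix_mulVec_normalFormField ε hG, ← hy]
    rfl
  simp only [← forall_and, ← hasDerivAt_vecCons_three_iff, hN, hF, hy, hasDerivAt_mulVec_iff hT]
end

section
/- The vector field Y(y1,y2,y3) = ((k1/ε) y1, -(k1/ε) y1 + y2 y3, -(k2/ε) y2 + y2 y3) commutes with the G = 0 system vector field F(y1,y2,y3) = (-k1 y1, k1 y1 - ε y2 y3, k2 y2 - ε y2 y3); i.e., their Lie bracket [Y, F] = DF·Y - DY·F vanishes identically. Hence Y generates a Lie point symmetry of the system. -/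
/-!
Dividing `F` by `-ε` gives exactly `Y`, and a vector field commutes with every constant multiple
of itself: `D(cF)·F = c DF·F = DF·(cF)`.
-/

open VectorField

lemma VectorField.lieBracket_const_smul_left_self {𝕜 E : Type*} [NontriviallyNormedField 𝕜]
    [NormedAddCommGroup E] [NormedSpace 𝕜 E] (c : 𝕜) (V : E → E) :
    lieBracket 𝕜 (c • V) V = 0 := by
  ext x
  simp [lieBracket, fderiv_const_smul_field]

theorem stmt_13 (k1 k2 ε : ℝ) (hε : ε ≠ 0)
    (F Y : ℝ × ℝ × ℝ → ℝ × ℝ × ℝ)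
    (hF : ∀ y : ℝ × ℝ × ℝ,
      F y = (-k1 * y.1, k1 * y.1 - ε * y.2.1 * y.2.2, k2 * y.2.1 - ε * y.2.1 * y.2.2))
    (hY : ∀ y : ℝ × ℝ × ℝ,
      Y y = ((k1 / ε) * y.1, -(k1 / ε) * y.1 + y.2.1 * y.2.2,
             -(k2 / ε) * y.2.1 + y.2.1 * y.2.2)) :
    ∀ y : ℝ × ℝ × ℝ, fderiv ℝ F y (Y y) - fderiv ℝ Y y (F y) = 0 := by
  have hYF : Y = (-ε⁻¹) • F := by
    ext y <;> simp only [hY, hF, Pi.smul_apply, Prod.smul_mk, smul_eq_mul] <;> field_simp <;> ring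
  intro y
  rw [hYF]
  exact congrFun (lieBracket_const_smul_left_self (-ε⁻¹) F) y
end
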